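/- Let w : ℝ × ℝ → ℝ be smooth, strictly positive, and 2π-periodic in x, satisfying the evolution equation w_τ = ∂_x²(w_x·w^{−3/2}) (the equation induced on w = u_{xx} by the dispersive flow u_τ = u_{xxx}(u_{xx})^{−3/2}). Then the functional γ₋₁ = ∫₀^{2π} √(w(x,τ)) dx is independent of τ. -/

import Mathlib

/-!
Differentiating under the integral sign, `d/dτ ∫ √w = ∫ w_τ / (2√w) = ½ ∫ w^{-1/2} F''` with
`F = w_x w^{-3/2}`. Since `(w^{-1/2})_x = -F/2`, the integrand `w^{-1/2} F''` is the exact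
`x`-derivative of `w^{-1/2} F' + F²/4`, which is periodic, so its integral over a period vanishes.
-/

open Real intervalIntegral

open Function MeasureTheory

theorem Function.Periodic.deriv {𝕜 F : Type*} [NontriviallyNormedField 𝕜] [NormedAddCommGroup F]
    [NormedSpace 𝕜 F] {f : 𝕜 → F} {c : 𝕜} (h : Periodic f c) : Periodic (deriv f) c := by
  intro x
  rw [← deriv_comp_add_const, show (fun y => f (y + c)) = f from funext h]

theorem Function.Periodic.integral_eq_zero_of_hasDerivAt {E : Type*} [NormedAddCommGroup E]
    [NormedSpace ℝ E] [CompleteSpace E] {H h : ℝ → E} {c : ℝ} (hH : Periodic H c)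
    (hderiv : ∀ x, HasDerivAt H (h x) x) (hint : IntervalIntegrable h volume 0 c) :
    ∫ x in 0..c, h x = 0 := by
  rw [integral_eq_sub_of_hasDerivAt (fun x _ => hderiv x) hint, ← zero_add c, hH, sub_self]

theorem hasDerivAt_intervalIntegral_of_continuous_partial {E : Type*} [NormedAddCommGroup E]
    [NormedSpace ℝ E] [CompleteSpace E] {F F' : ℝ → ℝ → E} (a b τ₀ : ℝ)
    (hF : Continuous (uncurry F)) (hF' : Continuous (uncurry F'))
    (hderiv : ∀ τ x, HasDerivAt (F · x) (F' τ x) τ) :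
    HasDerivAt (fun τ => ∫ x in a..b, F τ x) (∫ x in a..b, F' τ₀ x) τ₀ := by
  obtain ⟨C, hC⟩ := (isCompact_closedBall τ₀ 1 |>.prod isCompact_uIcc).exists_bound_of_continuousOn
      hF'.continuousOn
  refine (hasDerivAt_integral_of_dominated_loc_of_deriv_le (bound := fun _ => C)
    (Metric.ball_mem_nhds τ₀ one_pos) (.of_forall fun τ => (hF.uncurry_left τ).aestronglyMeasurable)
    ((hF.uncurry_left τ₀).intervalIntegrable _ _) (hF'.uncurry_left τ₀).aestronglyMeasurable
    (.of_forall fun x hx τ hτ =>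
      hC (τ, x) ⟨Metric.ball_subset_closedBall hτ, Set.uIoc_subset_uIcc hx⟩)
    intervalIntegrable_const (.of_forall fun x _ τ _ => hderiv τ x)).2

theorem DifferentiableAt.hasDerivAt_uncurry_snd {E : Type*} [NormedAddCommGroup E]
    [NormedSpace ℝ E] {w : ℝ → ℝ → E} {x τ : ℝ} (hw : DifferentiableAt ℝ (uncurry w) (x, τ)) :
    HasDerivAt (w x ·) (fderiv ℝ (uncurry w) (x, τ) (0, 1)) τ :=
  hw.hasFDerivAt.comp_hasDerivAt τ ((hasDerivAt_const τ x).prodMk (hasDerivAt_id τ))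

noncomputable def dispersiveFlux (f : ℝ → ℝ) (x : ℝ) : ℝ := deriv f x * f x ^ (-(3 : ℝ) / 2)

theorem integral_deriv_deriv_dispersiveFlux_div_two_sqrt_eq_zero
    {f : ℝ → ℝ} {c : ℝ} (hper : Periodic f c) (hf : ContDiff ℝ 3 f) (hpos : ∀ x, 0 < f x) :
    ∫ x in 0..c, deriv (deriv (dispersiveFlux f)) x / (2 * √(f x)) = 0 := by
  set F := dispersiveFlux f
  have hF : ContDiff ℝ 2 F :=
    hf.deriv'.mul ((hf.rpow_const_of_ne fun x => (hpos x).ne').of_le (by norm_num))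
  have hinvsqrt : ∀ x, HasDerivAt (fun y => f y ^ (-(1 : ℝ) / 2)) (-(F x / 2)) x := by
    intro x
    convert (hf.differentiable (by norm_num) x).hasDerivAt.rpow_const (p := -(1 : ℝ) / 2)
      (Or.inl (hpos x).ne') using 1
    norm_num [F, dispersiveFlux]
    ring
  -- `(f^{-1/2})' F' = -F F' / 2 = -(F² / 4)'` cancels the cross term of the product rule.
  have hprimitive : ∀ x, HasDerivAt (fun y => f y ^ (-(1 : ℝ) / 2) * deriv F y + F y ^ 2 / 4)
      (f x ^ (-(1 : ℝ) / 2) * deriv (deriv F) x) x := by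
    intro x
    have hF' := (hF.deriv' (n := 1)).differentiable one_ne_zero x
    exact (((hinvsqrt x).mul hF'.hasDerivAt).add
      (((hF.differentiable (by norm_num) x).hasDerivAt.pow 2).div_const 4)).congr_deriv (by ring)
  have hintegrand : ∀ x, deriv (deriv F) x / (2 * √(f x))
      = f x ^ (-(1 : ℝ) / 2) * deriv (deriv F) x / 2 := by
    intro x
    rw [sqrt_eq_rpow, neg_div, rpow_neg (hpos x).le]
    field_simp
  have hFper : Periodic F c := fun x => by simp only [F, dispersiveFlux, hper x, hper.deriv x]
  rw [integral_congr fun x _ => hintegrand x, intervalIntegral.integral_div,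
    Periodic.integral_eq_zero_of_hasDerivAt _ hprimitive, zero_div]
  · exact ((hf.continuous.rpow_const fun x => Or.inl (hpos x).ne').mul
      (hF.iterate_deriv' 0 2).continuous).intervalIntegrable _ _
  · exact fun x => by simp only [hper x, hFper x, hFper.deriv x]

/-- Let `w(x,τ)` be smooth, strictly positive and
`2π`-periodic in `x`, satisfying `w_τ = ∂_x²(w_x·w^{−3/2})` (the equation
induced on `w = u_{xx}` by the dispersive flow `u_τ = u_{xxx}(u_{xx})^{−3/2}`).
Then the functional `γ₋₁ = ∫₀^{2π} √(w(x,τ)) dx` is independent of `τ`. -/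
theorem dispersive_flow_conservation_gamma_minus_one
    (w : ℝ → ℝ → ℝ)
    (hw : ContDiff ℝ (⊤ : ℕ∞) (Function.uncurry w))
    (hpos : ∀ x τ, 0 < w x τ)
    (hper : ∀ τ, Function.Periodic (fun x => w x τ) (2 * π))
    (hflow : ∀ x τ,
      deriv (fun τ' => w x τ') τ
        = deriv (deriv (fun x' =>
            deriv (fun y => w y τ) x' * (w x' τ) ^ (-(3 : ℝ) / 2))) x) :
    ∀ τ₁ τ₂,
      (∫ x in (0 : ℝ)..(2 * π), Real.sqrt (w x τ₁))
        = ∫ x in (0 : ℝ)..(2 * π), Real.sqrt (w x τ₂) := by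
  have hwτ x τ := (hw.differentiable (by simp) (x, τ)).hasDerivAt_uncurry_snd
  have hcont : Continuous fun p : ℝ × ℝ => w p.2 p.1 := hw.continuous.comp continuous_swap
  have hwτcont : Continuous fun p : ℝ × ℝ => fderiv ℝ (uncurry w) (p.2, p.1) (0, 1) :=
    ((hw.continuous_fderiv (by simp)).clm_apply continuous_const).comp continuous_swap
  have hγ : ∀ τ, HasDerivAt (fun τ => ∫ x in 0..2 * π, √(w x τ)) 0 τ := by
    intro τ
    have hγ' := hasDerivAt_intervalIntegral_of_continuous_partial (F := fun τ x => √(w x τ))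
      (F' := fun τ x => fderiv ℝ (uncurry w) (x, τ) (0, 1) / (2 * √(w x τ))) 0 (2 * π) τ hcont.sqrt
      (hwτcont.div (continuous_const.mul hcont.sqrt)
        fun p => (mul_pos two_pos (sqrt_pos.2 (hpos p.2 p.1))).ne')
      fun τ x => (hwτ x τ).sqrt (hpos x τ).ne'
    simp only [← (hwτ _ τ).deriv, hflow] at hγ'
    have hslice : ContDiff ℝ 3 (w · τ) :=
      (hw.comp (contDiff_id.prodMk contDiff_const)).of_le (by norm_cast)
    exact hγ'.congr_deriv
      (integral_deriv_deriv_dispersiveFlux_div_two_sqrt_eq_zero (hper τ) hslice (hpos · τ))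
  exact fun τ₁ τ₂ => is_const_of_deriv_eq_zero (fun τ => (hγ τ).differentiableAt)
    (fun τ => (hγ τ).deriv) τ₁ τ₂
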